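/- arXiv:1804.11015 — 2 statements merged into one kernel-verified Lean document; each statement's English description precedes it below -/
import Mathlib

section
/- Fix integers n, k with 1 ≤ k ≤ n−1, and let L(q, n, k) = ∏_{j=0}^{k−1} (1 − q^{−(n−j)}). If either q ≥ 3 and t ≥ 1, or q = 2 and t ≥ 2 (q, t integers), then 1 − q^{−(n−k+1/2)·t} ≤ L(q^t, n, k). Moreover, if q = 2 and t = 1, then (1/2)·(1 − 2^{−(n−k+1/2)}) ≤ L(2, n, k). -/
/-!
A union bound (`∏ (1 - aⱼ) ≥ 1 - ∑ aⱼ`) and the geometric tail `∑_{j<k} Q^{-(n-j)} ≤ Q^{-(n-k)}/(Q-1)`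
give `L(Q, n, k) ≥ 1 - Q^{-(n-k)}/(Q-1)`. For `Q = q^t ≥ 3` one has `Q - 1 ≥ √Q`, which turns this
into `1 - Q^{-(n-k+1/2)}`; for `Q = 2` and `k < n` the bound is already at least `1/2`.
-/

open Real

noncomputable def LinIndepProb (q : ℝ) (n k : ℕ) : ℝ :=
  ∏ j ∈ Finset.range k, (1 - q ^ (-((n : ℝ) - (j : ℝ))))

open Finset

theorem one_sub_sum_le_prod_one_sub {ι R : Type*} [CommRing R] [LinearOrder R]
    [IsStrictOrderedRing R] (s : Finset ι) {f : ι → R} (hf0 : ∀ i ∈ s, 0 ≤ f i)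
    (hf1 : ∀ i ∈ s, f i ≤ 1) : 1 - ∑ i ∈ s, f i ≤ ∏ i ∈ s, (1 - f i) := by
  classical
  induction s using Finset.induction_on with
  | empty => simp
  | insert a s ha ih =>
    rw [sum_insert ha, prod_insert ha]
    have hfa := hf0 a (mem_insert_self a s)
    have hs := ih (fun i hi ↦ hf0 i (mem_insert_of_mem hi)) fun i hi ↦ hf1 i (mem_insert_of_mem hi)
    have hP1 : ∏ i ∈ s, (1 - f i) ≤ 1 :=
      prod_le_one (fun i hi ↦ sub_nonneg.2 (hf1 i (mem_insert_of_mem hi)))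
        fun i hi ↦ sub_le_self _ (hf0 i (mem_insert_of_mem hi))
    linarith [mul_le_mul_of_nonneg_left hP1 hfa]

theorem sum_range_pow_sub_le {x : ℝ} (hx0 : 0 ≤ x) (hx1 : x < 1) {n k : ℕ} (hkn : k ≤ n) :
    ∑ j ∈ range k, x ^ (n - j) ≤ x ^ (n + 1 - k) / (1 - x) := by
  calc ∑ j ∈ range k, x ^ (n - j) = ∑ i ∈ Ico (n + 1 - k) (n + 1), x ^ i := by
        rw [← sum_range_reflect, sum_Ico_eq_sum_range]
        refine sum_congr (by congr 1; omega) fun j hj ↦ ?_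
        rw [mem_range] at hj
        congr 1
        omega
    _ ≤ x ^ (n + 1 - k) / (1 - x) := geom_sum_Ico_le_of_lt_one hx0 hx1

theorem one_sub_pow_div_le_prod_one_sub_pow {x : ℝ} (hx0 : 0 ≤ x) (hx1 : x < 1) {n k : ℕ}
    (hkn : k ≤ n) : 1 - x ^ (n + 1 - k) / (1 - x) ≤ ∏ j ∈ range k, (1 - x ^ (n - j)) :=
  (sub_le_sub_left (sum_range_pow_sub_le hx0 hx1 hkn) 1).trans <|
    one_sub_sum_le_prod_one_sub _ (fun _ _ ↦ pow_nonneg hx0 _)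
      fun _ _ ↦ pow_le_one₀ hx0 hx1.le

theorem linIndepProb_eq_prod_inv_pow {Q : ℝ} (hQ : 0 < Q) {n k : ℕ} (hkn : k ≤ n) :
    LinIndepProb Q n k = ∏ j ∈ range k, (1 - Q⁻¹ ^ (n - j)) := by
  refine prod_congr rfl fun j hj ↦ ?_
  rw [← Nat.cast_sub ((mem_range.1 hj).le.trans hkn), rpow_neg hQ.le, rpow_natCast, inv_pow]

theorem one_sub_inv_pow_div_le_linIndepProb {Q : ℝ} (hQ : 1 < Q) {n k : ℕ} (hkn : k ≤ n) :
    1 - Q⁻¹ ^ (n - k) / (Q - 1) ≤ LinIndepProb Q n k := by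
  have hQ0 : 0 < Q := zero_lt_one.trans hQ
  have hx : Q⁻¹ ^ (n + 1 - k) / (1 - Q⁻¹) = Q⁻¹ ^ (n - k) / (Q - 1) := by
    rw [show n + 1 - k = n - k + 1 by omega, pow_succ]
    field_simp
  rw [linIndepProb_eq_prod_inv_pow hQ0 hkn, ← hx]
  exact one_sub_pow_div_le_prod_one_sub_pow (inv_nonneg.2 hQ0.le) (inv_lt_one_of_one_lt₀ hQ) hkn

theorem sqrt_le_sub_one {Q : ℝ} (hQ : 3 ≤ Q) : √Q ≤ Q - 1 :=
  sqrt_le_iff.2 ⟨by linarith, by nlinarith⟩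

theorem one_sub_rpow_le_linIndepProb {Q : ℝ} (hQ : 3 ≤ Q) {n k : ℕ} (hkn : k ≤ n) :
    1 - Q ^ (-((n : ℝ) - k + 1 / 2)) ≤ LinIndepProb Q n k := by
  have hQ0 : 0 < Q := by linarith
  have hsplit : Q ^ (-((n : ℝ) - k + 1 / 2)) = Q⁻¹ ^ (n - k) / √Q := by
    rw [neg_add, rpow_add hQ0, ← Nat.cast_sub hkn, rpow_neg hQ0.le, rpow_natCast, inv_pow,
      rpow_neg hQ0.le, ← sqrt_eq_rpow, div_eq_mul_inv]
  refine le_trans ?_ (one_sub_inv_pow_div_le_linIndepProb (by linarith) hkn)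
  rw [hsplit]
  gcongr
  exact sqrt_le_sub_one hQ

theorem half_le_linIndepProb_two {n k : ℕ} (hkn : k < n) : 1 / 2 ≤ LinIndepProb 2 n k := by
  refine le_trans ?_ (one_sub_inv_pow_div_le_linIndepProb one_lt_two hkn.le)
  have : (2 : ℝ)⁻¹ ^ (n - k) ≤ 2⁻¹ :=
    pow_le_of_le_one (by norm_num) (by norm_num) (by omega)
  norm_num at this ⊢
  linarith

theorem linIndepProb_lower_bound_general (n k : ℕ) (hk : 1 ≤ k) (hkn : k ≤ n - 1)
    (q t : ℕ) :
    ((3 ≤ q ∧ 1 ≤ t) ∨ (q = 2 ∧ 2 ≤ t) →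
      1 - ((q : ℝ) : ℝ) ^ (-(((n : ℝ) - (k : ℝ) + 1 / 2) * (t : ℝ))) ≤
        LinIndepProb ((q : ℝ) ^ (t : ℕ)) n k) ∧
    (q = 2 ∧ t = 1 →
      (1 / 2 : ℝ) * (1 - (2 : ℝ) ^ (-((n : ℝ) - (k : ℝ) + 1 / 2))) ≤
        LinIndepProb 2 n k) := by
  constructor
  · intro hqt
    have hQ : (3 : ℝ) ≤ (q : ℝ) ^ t := by
      rcases hqt with ⟨hq, ht⟩ | ⟨rfl, ht⟩
      · calc (3 : ℝ) ≤ q := by exact_mod_cast hq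
          _ ≤ (q : ℝ) ^ t := le_self_pow₀ (by norm_cast; omega) (by omega)
      · calc (3 : ℝ) ≤ 2 ^ 2 := by norm_num
          _ ≤ ((2 : ℕ) : ℝ) ^ t := by push_cast; exact pow_le_pow_right₀ (by norm_num) ht
    rw [mul_comm, neg_mul_eq_mul_neg, rpow_mul (Nat.cast_nonneg q), rpow_natCast]
    exact one_sub_rpow_le_linIndepProb hQ (by omega)
  · rintro -
    have hpos : (0 : ℝ) < 2 ^ (-((n : ℝ) - k + 1 / 2)) := rpow_pos_of_pos two_pos _
    have hhalf := half_le_linIndepProb_two (n := n) (k := k) (by omega)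
    linarith

/-- Fix `1 ≤ k ≤ n − 1`.  If either `q ≥ 3` and `t ≥ 1`, or `q = 2` and
`t ≥ 2`, then `1 − q^{−(n−k+1/2)t} ≤ L(q^t, n, k)`; moreover if `q = 2` and `t = 1` then
`(1/2)(1 − 2^{−(n−k+1/2)}) ≤ L(2, n, k)`. -/
theorem linIndepProb_lower_bound (n k : ℕ) (hk : 1 ≤ k) (hkn : k ≤ n - 1)
    (q t : ℕ) (hq : 2 ≤ q) (ht : 1 ≤ t) :
    ((3 ≤ q ∧ 1 ≤ t) ∨ (q = 2 ∧ 2 ≤ t) →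
      1 - ((q : ℝ) : ℝ) ^ (-(((n : ℝ) - (k : ℝ) + 1 / 2) * (t : ℝ))) ≤
        LinIndepProb ((q : ℝ) ^ (t : ℕ)) n k) ∧
    (q = 2 ∧ t = 1 →
      (1 / 2 : ℝ) * (1 - (2 : ℝ) ^ (-((n : ℝ) - (k : ℝ) + 1 / 2))) ≤
        LinIndepProb 2 n k) :=
  linIndepProb_lower_bound_general n k hk hkn q t
end

section
/- If C ⊂ P^r_k is a curve over a field k with homogeneous coordinate ring R (the quotient of k[x_0, …, x_r] by the saturated homogeneous ideal of C), then the Hilbert function of R satisfies dim_k R_d ≥ d + 1 for every natural number d. -/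
/-!
An associated prime `p` of `R` contains `I`, and `dim k[x]/p = 2`. As `R_d` surjects onto the
degree-`d` piece `A_d` of the domain `A = k[x]/p`, it suffices to show `dim_k A_d ≥ d + 1`.
Some `t = x_i` is nonzero in `A`, so multiplication by `t` embeds `A_d` into `A_{d+1}`, and the
embedding is never onto: if `t A_d = A_{d+1}`, then `A_{d+m} = t^m A_d` for all `m` (as `A` is
generated in degree one), so `A` is a finite module over `k[t]` and `dim A ≤ dim k[t] = 1`.
Hence `dim_k A_d` increases strictly with `d`, starting from `dim_k A_0 ≥ 1`.
-/

open MvPolynomial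

attribute [local instance] MvPolynomial.gradedAlgebra

/-- The degree-`d` graded piece of the homogeneous coordinate ring
`R = k[x_0, …, x_r]/I`, i.e. the image of the space of degree-`d` homogeneous
polynomials in the quotient. -/
noncomputable def quotGradedPiece (k : Type) [Field k] (r : ℕ)
    (I : Ideal (MvPolynomial (Fin (r + 1)) k)) (d : ℕ) :
    Submodule k (MvPolynomial (Fin (r + 1)) k ⧸ I) :=
  (MvPolynomial.homogeneousSubmodule (Fin (r + 1)) k d).map
    (Ideal.Quotient.mkₐ k I).toLinearMap

/-- The Hilbert function `d ↦ dim_k R_d` of `R = k[x_0, …, x_r]/I`. -/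
noncomputable def hilbertFunction (k : Type) [Field k] (r : ℕ)
    (I : Ideal (MvPolynomial (Fin (r + 1)) k)) (d : ℕ) : ℕ :=
  Module.finrank k (quotGradedPiece k r I d)

open Module
open scoped Pointwise

theorem ringKrullDim_le_of_isIntegral (A B : Type*) [CommRing A] [CommRing B] [Algebra A B]
    [Algebra.IsIntegral A B] : ringKrullDim B ≤ ringKrullDim A :=
  Order.krullDim_le_of_strictMono (fun P ↦ ⟨P.asIdeal.comap (algebraMap A B), inferInstance⟩)
    fun P Q hPQ ↦ by
      obtain ⟨hle, x, hxQ, hxP⟩ :=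
        SetLike.lt_iff_le_and_exists.mp (show P.asIdeal < Q.asIdeal from hPQ)
      exact Ideal.comap_lt_comap_of_integral_mem_sdiff hle ⟨hxQ, hxP⟩
        (Algebra.IsIntegral.isIntegral x)

theorem ringKrullDim_le_one_of_finite_adjoin_singleton {A : Type*} (k : Type*) [Field k]
    [CommRing A] [Algebra k A] (t : A) [Module.Finite (Algebra.adjoin k {t}) A] :
    ringKrullDim A ≤ 1 := by
  have hsurj : Function.Surjective (Polynomial.aeval (R := k)
      (⟨t, Algebra.self_mem_adjoin_singleton k t⟩ : Algebra.adjoin k {t})) := by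
    rintro ⟨b, hb⟩
    obtain ⟨p, rfl⟩ := Algebra.adjoin_singleton_eq_range_aeval k t ▸ hb
    exact ⟨p, Subtype.ext (Polynomial.aeval_algHom_apply (Algebra.adjoin k {t}).val _ p).symm⟩
  have := Algebra.IsIntegral.of_finite (Algebra.adjoin k {t}) A
  calc ringKrullDim A ≤ ringKrullDim (Algebra.adjoin k {t}) := ringKrullDim_le_of_isIntegral _ A
    _ ≤ ringKrullDim (Polynomial k) := ringKrullDim_le_of_surjective _ hsurj
    _ = 1 := by rw [Polynomial.ringKrullDim_of_isNoetherianRing, ringKrullDim_eq_zero_of_field]; rfl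

theorem le_of_mem_associatedPrimes_quotient {R : Type*} [CommRing R] {I p : Ideal R}
    (hp : p ∈ associatedPrimes R (R ⧸ I)) : I ≤ p := by
  simpa [Submodule.annihilator_top, Ideal.annihilator_quotient] using
    (AssociatedPrimes.mem_iff.mp hp).annihilator_le

/-- For `f = Ideal.Quotient.mkₐ k I` this is `quotGradedPiece k r I d`, except that here
`Submodule k A` uses the module structure of `Algebra k A` (not `Submodule.Quotient.module'`),
which is the one its semiring structure, needed for products of pieces, is stated for. -/
noncomputable def gradedPiece {σ k A : Type*} [CommRing k] [CommRing A] [Algebra k A]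
    (f : MvPolynomial σ k →ₐ[k] A) (d : ℕ) : Submodule k A :=
  (homogeneousSubmodule σ k d).map f.toLinearMap

section CommRing

variable {σ k A : Type*} [CommRing k] [CommRing A] [Algebra k A] (f : MvPolynomial σ k →ₐ[k] A)

theorem gradedPiece_fg [Finite σ] (d : ℕ) : (gradedPiece f d).FG :=
  (homogeneousSubmodule_fg σ k d).map _

theorem gradedPiece_succ (d : ℕ) : gradedPiece f (d + 1) = gradedPiece f d * gradedPiece f 1 := by
  rw [gradedPiece, ← homogeneousSubmodule_one_pow, Submodule.pow_succ, Submodule.map_mul,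
    homogeneousSubmodule_one_pow, gradedPiece, gradedPiece]

theorem iSup_gradedPiece (hf : Function.Surjective f) : ⨆ d, gradedPiece f d = ⊤ := by
  simp only [gradedPiece, ← Submodule.map_iSup,
    (DirectSum.Decomposition.isInternal _).submodule_iSup_eq_top, Submodule.map_top,
    LinearMap.range_eq_top]
  exact hf

theorem one_mem_gradedPiece_zero : 1 ∈ gradedPiece f 0 :=
  ⟨1, isHomogeneous_one σ k, map_one f⟩

theorem apply_X_mem_gradedPiece_one (i : σ) : f (X i) ∈ gradedPiece f 1 :=
  Submodule.mem_map_of_mem (isHomogeneous_X k i)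

theorem gradedPiece_comp {B : Type*} [CommRing B] [Algebra k B] (g : A →ₐ[k] B) (d : ℕ) :
    gradedPiece (g.comp f) d = (gradedPiece f d).map g.toLinearMap := by
  rw [gradedPiece, gradedPiece, ← Submodule.map_comp, AlgHom.comp_toLinearMap]

theorem pow_smul_gradedPiece_eq_of_smul_eq {t : A} {d : ℕ}
    (h : t • gradedPiece f d = gradedPiece f (d + 1)) (m : ℕ) :
    t ^ m • gradedPiece f d = gradedPiece f (d + m) := by
  induction m with
  | zero => rw [pow_zero, one_smul, add_zero]
  | succ m ih =>
    calc t ^ (m + 1) • gradedPiece f d = t ^ m • (gradedPiece f d * gradedPiece f 1) := by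
          rw [pow_succ, mul_smul, h, gradedPiece_succ]
      _ = (t ^ m • gradedPiece f d) * gradedPiece f 1 := by
          rw [← Submodule.span_singleton_mul, ← Submodule.span_singleton_mul, mul_assoc]
      _ = gradedPiece f (d + (m + 1)) := by rw [ih, ← add_assoc, gradedPiece_succ f (d + m)]

end CommRing

section Field

variable {σ k A : Type*} [Field k] [CommRing A] [Algebra k A] (f : MvPolynomial σ k →ₐ[k] A)

instance [Finite σ] (d : ℕ) : FiniteDimensional k (gradedPiece f d) :=
  Module.Finite.iff_fg.mpr (gradedPiece_fg f d)

theorem finrank_gradedPiece_comp_le [Finite σ] {B : Type*} [CommRing B] [Algebra k B]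
    (g : A →ₐ[k] B) (d : ℕ) :
    finrank k (gradedPiece (g.comp f) d) ≤ finrank k (gradedPiece f d) :=
  gradedPiece_comp f g d ▸ Submodule.finrank_map_le _ _

theorem exists_apply_X_ne_zero_of_ringKrullDim_pos (hf : Function.Surjective f)
    (hA : 0 < ringKrullDim A) : ∃ i, f (X i) ≠ 0 := by
  by_contra! hX
  have hfactor : f = (Algebra.ofId k A).comp (aeval 0) := algHom_ext fun i ↦ by simp [hX i]
  have hsurj : Function.Surjective (algebraMap k A) := fun y ↦ by
    obtain ⟨p, rfl⟩ := hf y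
    exact ⟨aeval 0 p, by rw [hfactor]; rfl⟩
  have := ringKrullDim_le_of_surjective _ hsurj
  rw [ringKrullDim_eq_zero_of_field] at this
  exact this.not_gt hA

theorem ringKrullDim_le_one_of_smul_gradedPiece_eq [Finite σ] (hf : Function.Surjective f)
    {t : A} {d : ℕ} (h : t • gradedPiece f d = gradedPiece f (d + 1)) :
    ringKrullDim A ≤ 1 := by
  set M := ⨆ e ∈ Finset.range (d + 1), gradedPiece f e
  have hM : ∀ e, gradedPiece f e ≤
      (Submodule.span (Algebra.adjoin k {t}) (M : Set A)).restrictScalars k := by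
    intro e
    rcases le_or_gt e d with hed | hde
    · exact (le_biSup (gradedPiece f) (Finset.mem_range_succ_iff.mpr hed)).trans
        Submodule.subset_span
    · obtain ⟨m, rfl⟩ := Nat.exists_eq_add_of_le hde.le
      rw [← pow_smul_gradedPiece_eq_of_smul_eq f h]
      rintro _ ⟨y, hy, rfl⟩
      have htm : t ^ m ∈ Algebra.adjoin k {t} :=
        Subalgebra.pow_mem _ (Algebra.self_mem_adjoin_singleton k t) m
      exact Submodule.smul_mem _ (⟨t ^ m, htm⟩ : Algebra.adjoin k {t})
        (Submodule.subset_span (le_biSup (gradedPiece f) (Finset.self_mem_range_succ d) hy))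
  have htop : Submodule.span (Algebra.adjoin k {t}) (M : Set A) = ⊤ := by
    rw [← Submodule.restrictScalars_eq_top_iff k, eq_top_iff, ← iSup_gradedPiece f hf]
    exact iSup_le hM
  have : Module.Finite (Algebra.adjoin k {t}) A :=
    ⟨htop ▸ (Submodule.fg_biSup _ _ fun e _ ↦ gradedPiece_fg f e).span⟩
  exact ringKrullDim_le_one_of_finite_adjoin_singleton k t

theorem finrank_gradedPiece_lt_succ [Finite σ] [IsDomain A] (hf : Function.Surjective f)
    (hA : 1 < ringKrullDim A) (d : ℕ) :
    finrank k (gradedPiece f d) < finrank k (gradedPiece f (d + 1)) := by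
  obtain ⟨i, hi⟩ := exists_apply_X_ne_zero_of_ringKrullDim_pos f hf (zero_lt_one.trans hA)
  have hle : f (X i) • gradedPiece f d ≤ gradedPiece f (d + 1) := by
    rw [← Submodule.span_singleton_mul, gradedPiece_succ]
    exact (mul_le_mul' ((Submodule.span_singleton_le_iff_mem _ _).mpr
      (apply_X_mem_gradedPiece_one f i)) le_rfl).trans_eq (mul_comm _ _)
  have hne : f (X i) • gradedPiece f d ≠ gradedPiece f (d + 1) :=
    fun h ↦ (ringKrullDim_le_one_of_smul_gradedPiece_eq f hf h).not_gt hA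
  calc finrank k (gradedPiece f d) = finrank k ↥(f (X i) • gradedPiece f d) :=
        (Submodule.equivMapOfInjective _ (mul_right_injective₀ hi) _).finrank_eq
    _ < _ := Submodule.finrank_lt_finrank_of_lt (hle.lt_of_ne hne)

theorem le_finrank_gradedPiece [Finite σ] [IsDomain A] (hf : Function.Surjective f)
    (hA : 1 < ringKrullDim A) (d : ℕ) : d + 1 ≤ finrank k (gradedPiece f d) := by
  induction d with
  | zero =>
    exact Module.finrank_pos_iff_exists_ne_zero.mpr ⟨⟨1, one_mem_gradedPiece_zero f⟩, by simp⟩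
  | succ d ih => exact ih.trans_lt (finrank_gradedPiece_lt_succ f hf hA d)

end Field

/-- `hass` encodes that `C` is equidimensional of dimension one without embedded components and
that `I` is saturated. -/
theorem hilbertFunction_curve_lower_bound_general (k : Type) [Field k] (r : ℕ)
    (I : Ideal (MvPolynomial (Fin (r + 1)) k))
    (hdim : ringKrullDim (MvPolynomial (Fin (r + 1)) k ⧸ I) = 2)
    (hass : ∀ p ∈ associatedPrimes (MvPolynomial (Fin (r + 1)) k)
      (MvPolynomial (Fin (r + 1)) k ⧸ I),
      ringKrullDim (MvPolynomial (Fin (r + 1)) k ⧸ p) = 2) :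
    ∀ d : ℕ, d + 1 ≤ hilbertFunction k r I d := by
  intro d
  have : Nontrivial (MvPolynomial (Fin (r + 1)) k ⧸ I) := not_subsingleton_iff_nontrivial.mp
    fun _ ↦ by simp [ringKrullDim_eq_bot_of_subsingleton] at hdim
  obtain ⟨p, hp⟩ := associatedPrimes.nonempty (MvPolynomial (Fin (r + 1)) k)
    (MvPolynomial (Fin (r + 1)) k ⧸ I)
  have : p.IsPrime := (AssociatedPrimes.mem_iff.mp hp).isPrime
  have hp2 : 1 < ringKrullDim (MvPolynomial (Fin (r + 1)) k ⧸ p) := by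
    rw [hass p hp]; norm_num
  have hcomp := finrank_gradedPiece_comp_le (Ideal.Quotient.mkₐ k I)
    (Ideal.Quotient.factorₐ k (le_of_mem_associatedPrimes_quotient hp)) d
  rw [Ideal.Quotient.factorₐ_comp_mk] at hcomp
  exact (le_finrank_gradedPiece _ (Ideal.Quotient.mkₐ_surjective k p) hp2 d).trans hcomp

/-- If `C ⊂ ℙ^r_k` is a curve with homogeneous coordinate ring
`R = k[x_0, …, x_r]/I` (so `I` is homogeneous, `R` has Krull dimension `2`, and — `C` being
equidimensional of dimension one with no embedded components and `I` saturated — every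
associated prime `p` of `R` satisfies `dim k[x]/p = 2`), then `dim_k R_d ≥ d + 1` for every
natural number `d`. -/
theorem hilbertFunction_curve_lower_bound (k : Type) [Field k] (r : ℕ)
    (I : Ideal (MvPolynomial (Fin (r + 1)) k))
    (hI : I.IsHomogeneous (MvPolynomial.homogeneousSubmodule (Fin (r + 1)) k))
    (hdim : ringKrullDim (MvPolynomial (Fin (r + 1)) k ⧸ I) = 2)
    (hass : ∀ p ∈ associatedPrimes (MvPolynomial (Fin (r + 1)) k)
      (MvPolynomial (Fin (r + 1)) k ⧸ I),
      ringKrullDim (MvPolynomial (Fin (r + 1)) k ⧸ p) = 2) :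
    ∀ d : ℕ, d + 1 ≤ hilbertFunction k r I d :=
  hilbertFunction_curve_lower_bound_general k r I hdim hass
end
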